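/- Let (X,Y) ∈ [0,1]^d × {-1,1} be a random couple with distribution P whose regression function η and marginal Π satisfy the low noise assumption with parameters B, γ > 0. Then there exists a constant D2 > 0 depending only on B and γ such that for every bounded measurable f : [0,1]^d → ℝ, R_P(f) − R* ≤ D2 · ‖(f − η)·1{sign f ≠ sign η}‖_{L²(Π)}^{2(1+γ)/(2+γ)}. -/

import Mathlib

/-
On the event `sgn f ≠ sgn η` one has `|η| ≤ |f - η|`. Since the excess risk is
`E[|η(X)| 1{sgn f(X) ≠ sgn η(X)}]`, splitting according to `|η(X)| ≤ t` bounds it by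
`t Π(|η| ≤ t) + δ² / t ≤ B t^(1+γ) + δ² / t`, where `δ` is the `L²(Π)` norm in the statement;
the choice `t = δ^(2/(2+γ))` gives `(B + 1) δ^(2(1+γ)/(2+γ))`.
-/

open MeasureTheory ProbabilityTheory Set

noncomputable section

namespace ActivePlugIn

variable {d : ℕ}

/-- The unit cube `[0,1]^d`. -/
def cube (d : ℕ) : Set (Fin d → ℝ) := Set.Icc 0 1

/-- Sign function (with the convention `sgn 0 = -1`). -/
def sgn (t : ℝ) : ℝ := if 0 < t then 1 else -1

/-- Binary classification risk `R_P(f) = P(Y ≠ sign f(X))`. -/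
def risk (P : Measure ((Fin d → ℝ) × ℝ)) (f : (Fin d → ℝ) → ℝ) : ℝ :=
  (P {p | p.2 ≠ sgn (f p.1)}).toReal

/-- Bayes risk: infimum of the risk over all measurable `g : [0,1]^d → [-1,1]`. -/
def bayesRisk (P : Measure ((Fin d → ℝ) × ℝ)) : ℝ :=
  ⨅ g : {g : (Fin d → ℝ) → ℝ // Measurable g ∧ ∀ x, g x ∈ Set.Icc (-1 : ℝ) 1},
    risk P g.1

/-- `η` is (a version of) the regression function `E(Y | X = x)` of `P`. -/
def IsRegressionOf (η : (Fin d → ℝ) → ℝ) (P : Measure ((Fin d → ℝ) × ℝ)) : Prop :=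
  ∀ s : Set (Fin d → ℝ), MeasurableSet s →
    ∫ p in Prod.fst ⁻¹' s, p.2 ∂P = ∫ x in s, η x ∂(P.map Prod.fst)

/-- `P` is a distribution of a random couple `(X,Y) ∈ [0,1]^d × {-1,1}` with
regression function `η`. -/
def GoodPair (d : ℕ) (P : Measure ((Fin d → ℝ) × ℝ)) (η : (Fin d → ℝ) → ℝ) : Prop :=
  IsProbabilityMeasure P ∧ Measurable η ∧ (∀ x, η x ∈ Set.Icc (-1 : ℝ) 1) ∧
    (∀ᵐ p ∂P, p.1 ∈ cube d ∧ (p.2 = 1 ∨ p.2 = -1)) ∧ IsRegressionOf η P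

/-- Tsybakov's low noise assumption with constants `B, γ`. -/
def LowNoise (B γ : ℝ) (μ : Measure (Fin d → ℝ)) (η : (Fin d → ℝ) → ℝ) : Prop :=
  ∀ t : ℝ, 0 < t → μ {x | |η x| ≤ t} ≤ ENNReal.ofReal (B * t ^ γ)

/-- Index of the level-`m` dyadic cube containing `x`. -/
def cubeIdx (m : ℕ) (x : Fin d → ℝ) : Fin d → ℕ := fun i => ⌊x i * 2 ^ m⌋₊

/-- The (half-open) level-`m` dyadic cube with index `k`. -/
def dyadicCube (d m : ℕ) (k : Fin d → ℕ) : Set (Fin d → ℝ) :=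
  {x | ∀ i, (k i : ℝ) / 2 ^ m ≤ x i ∧ x i < ((k i : ℝ) + 1) / 2 ^ m}

/-- Support of a measure: points all of whose open neighbourhoods have positive mass. -/
def suppSet (μ : Measure (Fin d → ℝ)) : Set (Fin d → ℝ) :=
  {x | ∀ U : Set (Fin d → ℝ), IsOpen U → x ∈ U → μ U ≠ 0}

/-- `A` belongs to the sigma-algebra generated by level-`m` dyadic cubes,
i.e. it is a union of level-`m` dyadic cubes. -/
def IsDyadicUnion (d m : ℕ) (A : Set (Fin d → ℝ)) : Prop :=
  ∃ S : Set (Fin d → ℕ), A = ⋃ k ∈ S, dyadicCube d m k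

/-- `(u1,u2)`-regularity of a measure with respect to the dyadic partitions. -/
def Regular (d : ℕ) (u1 u2 : ℝ) (μ : Measure (Fin d → ℝ)) : Prop :=
  ∀ m : ℕ, 1 ≤ m → ∀ k : Fin d → ℕ, (∀ i, k i < 2 ^ m) →
    (dyadicCube d m k ∩ suppSet μ).Nonempty →
    ENNReal.ofReal (u1 / 2 ^ (d * m)) ≤ μ (dyadicCube d m k) ∧
      μ (dyadicCube d m k) ≤ ENNReal.ofReal (u2 / 2 ^ (d * m))

/-- The `L²(μ)`-projection `η̄_m` of `η` onto piecewise-constant functions over the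
level-`m` dyadic partition: on each cube it is the `μ`-average of `η` over that cube. -/
def etaBar (μ : Measure (Fin d → ℝ)) (η : (Fin d → ℝ) → ℝ) (m : ℕ) (x : Fin d → ℝ) : ℝ :=
  ⨍ y in dyadicCube d m (cubeIdx m x), η y ∂μ

/-- `A` approximates the decision boundary at level `t`. -/
def ApproxBoundary (μ : Measure (Fin d → ℝ)) (η : (Fin d → ℝ) → ℝ) (t : ℝ)
    (A : Set (Fin d → ℝ)) : Prop :=
  {x | |η x| ≤ t} ∩ suppSet μ ⊆ A ∩ suppSet μ ∧
    A ∩ suppSet μ ⊆ {x | |η x| ≤ 3 * t} ∩ suppSet μ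

/-- Assumption 2 of the paper, with constant `B2`. -/
def Assumption2 (d : ℕ) (B2 : ℝ) (μ : Measure (Fin d → ℝ)) (η : (Fin d → ℝ) → ℝ) : Prop :=
  ∀ m : ℕ, 1 ≤ m → ∀ A : Set (Fin d → ℝ), IsDyadicUnion d m A →
    (∃ t : ℝ, 0 < t ∧ ApproxBoundary μ η t A) → (A ∩ suppSet μ).Nonempty →
    B2 * (⨆ x ∈ A ∩ suppSet μ, |η x - etaBar μ η m x|) ^ 2 ≤
      ∫ x, (η x - etaBar μ η m x) ^ 2 ∂(μ[|A ∩ suppSet μ])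

/-- The law of the label `Y ∈ {-1,1}` given `X = x`: `P(Y = 1|X = x) = (1 + η(x))/2`. -/
def labelKernel (d : ℕ) (η : (Fin d → ℝ) → ℝ) (x : Fin d → ℝ) : Measure ℝ :=
  ENNReal.ofReal ((1 + η x) / 2) • Measure.dirac 1 +
    ENNReal.ofReal ((1 - η x) / 2) • Measure.dirac (-1)

/-- The joint law of `(X,Y)` when `X ∼ μ` and `P(Y = 1|X = x) = (1 + η(x))/2`. -/
def jointMeasure (d : ℕ) (μ : Measure (Fin d → ℝ)) (η : (Fin d → ℝ) → ℝ) :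
    Measure ((Fin d → ℝ) × ℝ) :=
  μ.bind fun x => (labelKernel d η x).map fun y => (x, y)

/-- The law of the trajectory `(X_1,Y_1,…,X_N,Y_N)` of an active learning procedure:
`X_k` is sampled from the kernel `samp` applied to the past observations and `Y_k` is
sampled from the conditional label distribution determined by `η`. -/
def traj (d : ℕ) (η : (Fin d → ℝ) → ℝ)
    (samp : (k : ℕ) → (Fin k → ((Fin d → ℝ) × ℝ)) → Measure (Fin d → ℝ)) :
    (N : ℕ) → Measure (Fin N → ((Fin d → ℝ) × ℝ))
  | 0 => Measure.dirac fun i => i.elim0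
  | (N + 1) =>
      (traj d η samp N).bind fun h =>
        (samp N h).bind fun x => (labelKernel d η x).map fun y => Fin.snoc h (x, y)

/-- Kullback–Leibler divergence `KL(P,Q) = ∫ log (dP/dQ) dP`. -/
def kl {Ω : Type*} [MeasurableSpace Ω] (P Q : Measure Ω) : ℝ :=
  ∫ ω, Real.log ((P.rnDeriv Q ω).toReal) ∂P

/-- Multivariate Taylor polynomial of degree `n` of `g` at `x`, evaluated at `x1`. -/
def taylorP (d : ℕ) (g : (Fin d → ℝ) → ℝ) (n : ℕ) (x x1 : Fin d → ℝ) : ℝ :=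
  ∑ k ∈ Finset.range (n + 1),
    (1 / (Nat.factorial k : ℝ)) * iteratedFDeriv ℝ k g x (fun _ => x1 - x)

/-- The Hölder class `Σ(β,K,[0,1]^d)`. -/
def HolderSigma (d : ℕ) (β K : ℝ) (g : (Fin d → ℝ) → ℝ) : Prop :=
  ContDiff ℝ (⌊β⌋₊ : ℕ) g ∧
    ∀ x ∈ cube d, ∀ x1 ∈ cube d, |g x1 - taylorP d g ⌊β⌋₊ x x1| ≤ K * ‖x - x1‖ ^ β

/-- The Hölder condition for exponent `0 < β ≤ 1` with constant `L`
(`‖·‖` on `Fin d → ℝ` is the sup-norm). -/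
def HolderLow (d : ℕ) (β L : ℝ) (η : (Fin d → ℝ) → ℝ) : Prop :=
  ∀ x1 ∈ cube d, ∀ x2 ∈ cube d, |η x1 - η x2| ≤ L * ‖x1 - x2‖ ^ β

/-- The class `F_m` of piecewise-constant functions over the level-`m` dyadic partition
with values bounded by `1`. -/
def Fclass (d m : ℕ) : Set ((Fin d → ℝ) → ℝ) :=
  {f | ∃ lam : (Fin d → ℕ) → ℝ, (∀ k, |lam k| ≤ 1) ∧ f = fun x => lam (cubeIdx m x)}

/-- Empirical quadratic risk `P_N (Y - f(X))²`. -/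
def empRisk {d : ℕ} (N : ℕ) (ω : Fin N → ((Fin d → ℝ) × ℝ)) (f : (Fin d → ℝ) → ℝ) : ℝ :=
  (∑ j, ((ω j).2 - f (ω j).1) ^ 2) / N

/-- The set `J(N)` of admissible resolution levels. -/
def Jset (d N : ℕ) : Set ℕ :=
  {m | 1 ≤ (2 : ℝ) ^ (d * m) ∧ (2 : ℝ) ^ (d * m) ≤ (N : ℝ) / (Real.log N) ^ 2}

/-- The penalized model-selection criterion with constant `K1`
(`s_m = m (s + log log₂ N)`). -/
def crit {d : ℕ} (K1 s : ℝ) (N : ℕ) (ω : Fin N → ((Fin d → ℝ) × ℝ)) (m : ℕ) : ℝ :=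
  (⨅ f ∈ Fclass d m, empRisk N ω f) +
    K1 * ((2 : ℝ) ^ (d * m) + m * (s + Real.log (Real.logb 2 N))) / N

/-- `inf_{f ∈ F_m} E (f(X) - η(X))²`. -/
def approxErr {d : ℕ} (μ : Measure (Fin d → ℝ)) (η : (Fin d → ℝ) → ℝ) (m : ℕ) : ℝ :=
  ⨅ f ∈ Fclass d m, ∫ x, (f x - η x) ^ 2 ∂μ

/-- `m̄ = min {m ≥ 1 : inf_{f ∈ F_m} E(f(X)-η(X))² ≤ K2 2^{dm}/N}`. -/
def mbar {d : ℕ} (K2 : ℝ) (N : ℕ) (μ : Measure (Fin d → ℝ)) (η : (Fin d → ℝ) → ℝ) : ℕ :=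
  sInf {m | 1 ≤ m ∧ approxErr μ η m ≤ K2 * (2 : ℝ) ^ (d * m) / N}

/-- Membership in the class `P*_U(β,γ)` (with Hölder smoothness stated for general `β`
via Taylor polynomials), for the pair (marginal `μ`, regression function `η`). -/
def InStarClass (d : ℕ) (β γ B K u1 u2 B2 : ℝ) (μ : Measure (Fin d → ℝ))
    (η : (Fin d → ℝ) → ℝ) : Prop :=
  IsProbabilityMeasure μ ∧ μ (cube d) = 1 ∧ Measurable η ∧
    (∀ x, η x ∈ Set.Icc (-1 : ℝ) 1) ∧ LowNoise B γ μ η ∧ HolderSigma d β K η ∧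
    Regular d u1 u2 μ ∧ Assumption2 d B2 μ η

/-- Membership in the class `P*_U(β,γ)` for `0 < β ≤ 1`, with Hölder constant `B1`. -/
def InStarClassLow (d : ℕ) (β γ B B1 u1 u2 B2 : ℝ) (μ : Measure (Fin d → ℝ))
    (η : (Fin d → ℝ) → ℝ) : Prop :=
  IsProbabilityMeasure μ ∧ μ (cube d) = 1 ∧ Measurable η ∧
    (∀ x, η x ∈ Set.Icc (-1 : ℝ) 1) ∧ LowNoise B γ μ η ∧ HolderLow d β B1 η ∧
    Regular d u1 u2 μ ∧ Assumption2 d B2 μ η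

open Filter Topology

lemma measurable_sgn : Measurable sgn :=
  Measurable.ite (measurableSet_lt measurable_const measurable_id) measurable_const
    measurable_const

lemma sgn_eq_one_or_eq_neg_one (t : ℝ) : sgn t = 1 ∨ sgn t = -1 := by
  unfold sgn; split <;> simp

lemma abs_sgn (t : ℝ) : |sgn t| = 1 := by
  rcases sgn_eq_one_or_eq_neg_one t with h | h <;> simp [h]

lemma mul_sgn_self (a : ℝ) : a * sgn a = |a| := by
  unfold sgn; split
  · rw [abs_of_pos ‹_›, mul_one]
  · rw [abs_of_nonpos (le_of_not_gt ‹_›), mul_neg_one]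

lemma mul_sgn_le_abs (a b : ℝ) : b * sgn a ≤ |b| := by
  rcases sgn_eq_one_or_eq_neg_one a with h | h <;> rw [h]
  · simpa using le_abs_self b
  · simpa using neg_le_abs b

lemma mul_sgn_eq_neg_abs_of_sgn_ne {a b : ℝ} (h : sgn a ≠ sgn b) : b * sgn a = -|b| := by
  unfold sgn at h ⊢
  split_ifs at h ⊢ with ha hb hb <;> first | exact absurd rfl h | skip
  · rw [abs_of_nonpos (le_of_not_gt hb), mul_one, neg_neg]
  · rw [abs_of_pos hb, mul_neg_one]

lemma abs_le_abs_sub_of_sgn_ne {a b : ℝ} (h : sgn a ≠ sgn b) : |b| ≤ |a - b| := by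
  unfold sgn at h
  split_ifs at h with ha hb hb <;> first | exact absurd rfl h | skip
  · rw [abs_of_nonpos (le_of_not_gt hb), abs_of_pos (by linarith)]; linarith
  · rw [abs_of_pos hb, abs_of_neg (by linarith)]; linarith

lemma abs_sub_mul_sgn_div_two_le (a b : ℝ) {t : ℝ} (ht : 0 < t) :
    (|b| - b * sgn a) / 2 ≤
      (if |b| ≤ t then t else 0) + (if sgn a ≠ sgn b then (a - b) ^ 2 else 0) / t := by
  by_cases hab : sgn a ≠ sgn b
  · rw [mul_sgn_eq_neg_abs_of_sgn_ne hab, if_pos hab]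
    have hsq : 0 ≤ (a - b) ^ 2 / t := by positivity
    by_cases hbt : |b| ≤ t
    · rw [if_pos hbt]; linarith
    · rw [if_neg hbt, zero_add, le_div_iff₀ ht, ← sq_abs (a - b)]
      rw [not_le] at hbt
      nlinarith [abs_le_abs_sub_of_sgn_ne hab, abs_nonneg b]
  · rw [not_not.mp hab, mul_sgn_self, sub_self, zero_div, if_neg (not_not.mpr rfl), zero_div,
      add_zero]
    split <;> linarith

lemma integrable_ite_sgn_ne_sq_sub {α : Type*} [MeasurableSpace α] {μ : Measure α}
    [IsFiniteMeasure μ] {f η : α → ℝ} (hf : Measurable f) (hη : Measurable η) {M N : ℝ}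
    (hfM : ∀ x, |f x| ≤ M) (hηN : ∀ x, |η x| ≤ N) :
    Integrable (fun x => if sgn (f x) ≠ sgn (η x) then (f x - η x) ^ 2 else 0) μ := by
  have hD : MeasurableSet {x | sgn (f x) ≠ sgn (η x)} :=
    (measurableSet_eq_fun (measurable_sgn.comp hf) (measurable_sgn.comp hη)).compl
  refine Integrable.of_bound (Measurable.ite hD ((hf.sub hη).pow_const 2)
    measurable_const).aestronglyMeasurable ((M + N) ^ 2) (ae_of_all _ fun x => ?_)
  split
  · rw [Real.norm_eq_abs, abs_pow]
    exact pow_le_pow_left₀ (abs_nonneg _) ((abs_sub _ _).trans (add_le_add (hfM x) (hηN x))) 2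
  · rw [norm_zero]; positivity

lemma integral_abs_sub_mul_sgn_div_two_le {α : Type*} [MeasurableSpace α] {μ : Measure α}
    [IsFiniteMeasure μ] {f η : α → ℝ} (hη : Measurable η)
    (hI : Integrable (fun x => if sgn (f x) ≠ sgn (η x) then (f x - η x) ^ 2 else 0) μ)
    {t : ℝ} (ht : 0 < t) :
    ∫ x, (|η x| - η x * sgn (f x)) / 2 ∂μ ≤
      t * μ.real {x | |η x| ≤ t} +
        (∫ x, (if sgn (f x) ≠ sgn (η x) then (f x - η x) ^ 2 else 0) ∂μ) / t := by
  have hS : MeasurableSet {x | |η x| ≤ t} := measurableSet_le hη.abs measurable_const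
  have hind : Integrable ({x | |η x| ≤ t}.indicator fun _ => t) μ :=
    (integrable_const t).indicator hS
  calc ∫ x, (|η x| - η x * sgn (f x)) / 2 ∂μ
      ≤ ∫ x, ({x | |η x| ≤ t}.indicator (fun _ => t) x +
          (if sgn (f x) ≠ sgn (η x) then (f x - η x) ^ 2 else 0) / t) ∂μ := by
        refine integral_mono_of_nonneg (ae_of_all _ fun x => ?_) (hind.add (hI.div_const t))
          (ae_of_all _ fun x => ?_)
        · have := mul_sgn_le_abs (f x) (η x)
          simp only [Pi.zero_apply]; linarith
        · simpa only [Set.indicator_apply, Set.mem_ofPred_eq]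
            using abs_sub_mul_sgn_div_two_le (f x) (η x) ht
    _ = t * μ.real {x | |η x| ≤ t} +
          (∫ x, (if sgn (f x) ≠ sgn (η x) then (f x - η x) ^ 2 else 0) ∂μ) / t := by
        rw [integral_add hind (hI.div_const t), integral_indicator_const t hS, smul_eq_mul,
          mul_comm, integral_div]

lemma LowNoise.measureReal_le {B γ t : ℝ} {μ : Measure (Fin d → ℝ)} {η : (Fin d → ℝ) → ℝ}
    (h : LowNoise B γ μ η) (hB : 0 ≤ B) (ht : 0 < t) :
    μ.real {x | |η x| ≤ t} ≤ B * t ^ γ :=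
  ENNReal.toReal_le_of_le_ofReal (by positivity) (h t ht)

lemma le_add_one_mul_rpow_of_forall_le {B γ δ E : ℝ} (hγ : -1 < γ) (hδ : 0 ≤ δ)
    (h : ∀ t : ℝ, 0 < t → E ≤ B * t ^ (1 + γ) + δ ^ 2 / t) :
    E ≤ (B + 1) * δ ^ (2 * (1 + γ) / (2 + γ)) := by
  have hγ1 : 0 < 1 + γ := by linarith
  have hγ2 : 0 < 2 + γ := by linarith
  rcases hδ.eq_or_lt with rfl | hδ
  · have hlim : Tendsto (fun t : ℝ => B * t ^ (1 + γ)) (𝓝[>] 0) (𝓝 0) := by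
      have := ((continuous_id.rpow_const fun _ => Or.inr hγ1.le).tendsto 0).const_mul B
      simpa [Real.zero_rpow hγ1.ne'] using this.mono_left nhdsWithin_le_nhds
    rw [Real.zero_rpow (by positivity), mul_zero]
    refine ge_of_tendsto hlim (eventually_nhdsWithin_of_forall fun t ht => ?_)
    simpa using h t ht
  · set t := δ ^ (2 / (2 + γ))
    have ht : 0 < t := Real.rpow_pos_of_pos hδ _
    have h1 : t ^ (1 + γ) = δ ^ (2 * (1 + γ) / (2 + γ)) := by
      rw [← Real.rpow_mul hδ.le]; congr 1; field_simp
    have h2 : δ ^ 2 / t = δ ^ (2 * (1 + γ) / (2 + γ)) := by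
      rw [← Real.rpow_natCast, ← Real.rpow_sub hδ]; congr 1; field_simp; push_cast; ring
    calc E ≤ B * t ^ (1 + γ) + δ ^ 2 / t := h t ht
      _ = (B + 1) * δ ^ (2 * (1 + γ) / (2 + γ)) := by rw [h1, h2]; ring

lemma IsRegressionOf.integral_snd_mul_sgn {η g : (Fin d → ℝ) → ℝ}
    {P : Measure ((Fin d → ℝ) × ℝ)} (hreg : IsRegressionOf η P) (hY : Integrable Prod.snd P)
    (hη : Integrable η (P.map Prod.fst)) (hg : Measurable g) :
    ∫ p, p.2 * sgn (g p.1) ∂P = ∫ x, η x * sgn (g x) ∂(P.map Prod.fst) := by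
  set s := {x | 0 < g x}
  have hs : MeasurableSet s := measurableSet_lt measurable_const hg
  have hs' : MeasurableSet (Prod.fst ⁻¹' s : Set ((Fin d → ℝ) × ℝ)) := measurable_fst hs
  calc ∫ p, p.2 * sgn (g p.1) ∂P
      = ∫ p, ((Prod.fst ⁻¹' s).indicator Prod.snd p - (Prod.fst ⁻¹' s)ᶜ.indicator Prod.snd p) ∂P :=
        integral_congr_ae (ae_of_all _ fun p => by
          by_cases hp : 0 < g p.1 <;> simp [s, sgn, hp])
    _ = ∫ p in Prod.fst ⁻¹' s, p.2 ∂P - ∫ p in Prod.fst ⁻¹' sᶜ, p.2 ∂P := by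
        rw [integral_sub (hY.indicator hs') (hY.indicator hs'.compl), integral_indicator hs',
          integral_indicator hs'.compl, Set.preimage_compl]
    _ = ∫ x in s, η x ∂(P.map Prod.fst) - ∫ x in sᶜ, η x ∂(P.map Prod.fst) := by
        rw [hreg s hs, hreg sᶜ hs.compl]
    _ = ∫ x, η x * sgn (g x) ∂(P.map Prod.fst) := by
        rw [← integral_indicator hs, ← integral_indicator hs.compl,
          ← integral_sub (hη.indicator hs) (hη.indicator hs.compl)]
        refine integral_congr_ae (ae_of_all _ fun x => ?_)
        by_cases hx : 0 < g x <;> simp [s, sgn, hx]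

namespace GoodPair

variable {P : Measure ((Fin d → ℝ) × ℝ)} {η : (Fin d → ℝ) → ℝ}

lemma isProbabilityMeasure_map_fst (hP : GoodPair d P η) :
    IsProbabilityMeasure (P.map Prod.fst) :=
  have := hP.1
  Measure.isProbabilityMeasure_map measurable_fst.aemeasurable

lemma integrable_snd (hP : GoodPair d P η) : Integrable Prod.snd P := by
  have := hP.1
  refine Integrable.of_bound measurable_snd.aestronglyMeasurable 1 ?_
  filter_upwards [hP.2.2.2.1] with p hp
  rcases hp.2 with h | h <;> simp [h]

lemma integrable_mul_sgn (hP : GoodPair d P η) {g : (Fin d → ℝ) → ℝ} (hg : Measurable g) :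
    Integrable (fun x => η x * sgn (g x)) (P.map Prod.fst) := by
  have := hP.isProbabilityMeasure_map_fst
  refine Integrable.of_bound (hP.2.1.mul (measurable_sgn.comp hg)).aestronglyMeasurable 1
    (ae_of_all _ fun x => ?_)
  rw [Real.norm_eq_abs, abs_mul, abs_sgn, mul_one, abs_le]
  exact hP.2.2.1 x

lemma integrable_one_sub_mul_sgn_div_two (hP : GoodPair d P η) {g : (Fin d → ℝ) → ℝ}
    (hg : Measurable g) :
    Integrable (fun x => (1 - η x * sgn (g x)) / 2) (P.map Prod.fst) :=
  have := hP.isProbabilityMeasure_map_fst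
  ((integrable_const 1).sub (hP.integrable_mul_sgn hg)).div_const 2

lemma risk_eq_integral (hP : GoodPair d P η) {g : (Fin d → ℝ) → ℝ} (hg : Measurable g) :
    risk P g = ∫ x, (1 - η x * sgn (g x)) / 2 ∂(P.map Prod.fst) := by
  obtain ⟨hprob, hη, hηbd, hae, hreg⟩ := id hP
  have := hP.isProbabilityMeasure_map_fst
  have hsg : Measurable fun p : (Fin d → ℝ) × ℝ => sgn (g p.1) :=
    measurable_sgn.comp (hg.comp measurable_fst)
  have hbad : MeasurableSet {p : (Fin d → ℝ) × ℝ | p.2 ≠ sgn (g p.1)} :=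
    (measurableSet_eq_fun measurable_snd hsg).compl
  have hη_int : Integrable η (P.map Prod.fst) :=
    Integrable.of_bound hη.aestronglyMeasurable 1
      (ae_of_all _ fun x => by rw [Real.norm_eq_abs, abs_le]; exact hηbd x)
  have hYsg : Integrable (fun p : (Fin d → ℝ) × ℝ => p.2 * sgn (g p.1)) P :=
    hP.integrable_snd.mul_bdd hsg.aestronglyMeasurable
      (ae_of_all _ fun p => (abs_sgn (g p.1)).le)
  calc risk P g = ∫ p, {p : (Fin d → ℝ) × ℝ | p.2 ≠ sgn (g p.1)}.indicator 1 p ∂P :=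
        (integral_indicator_one hbad).symm
    _ = ∫ p, (1 - p.2 * sgn (g p.1)) / 2 ∂P := by
        refine integral_congr_ae ?_
        filter_upwards [hae] with p hp
        rcases hp.2 with h | h <;> rcases sgn_eq_one_or_eq_neg_one (g p.1) with h' | h' <;>
          simp [Set.indicator_apply, h, h'] <;> norm_num
    _ = (1 - ∫ p, p.2 * sgn (g p.1) ∂P) / 2 := by
        rw [integral_div, integral_sub (integrable_const 1) hYsg, integral_const]; simp
    _ = (1 - ∫ x, η x * sgn (g x) ∂(P.map Prod.fst)) / 2 := by
        rw [hreg.integral_snd_mul_sgn hP.integrable_snd hη_int hg]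
    _ = ∫ x, (1 - η x * sgn (g x)) / 2 ∂(P.map Prod.fst) := by
        rw [integral_div, integral_sub (integrable_const 1) (hP.integrable_mul_sgn hg),
          integral_const]; simp

lemma risk_le_bayesRisk (hP : GoodPair d P η) : risk P η ≤ bayesRisk P := by
  have : Nonempty {g : (Fin d → ℝ) → ℝ // Measurable g ∧ ∀ x, g x ∈ Set.Icc (-1 : ℝ) 1} :=
    ⟨⟨fun _ => 0, measurable_const, fun _ => by norm_num⟩⟩
  refine le_ciInf fun g => ?_
  rw [hP.risk_eq_integral hP.2.1, hP.risk_eq_integral g.2.1]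
  refine integral_mono (hP.integrable_one_sub_mul_sgn_div_two hP.2.1)
    (hP.integrable_one_sub_mul_sgn_div_two g.2.1) fun x => ?_
  have := mul_sgn_le_abs (g.1 x) (η x)
  rw [← mul_sgn_self] at this
  dsimp only
  linarith

lemma risk_sub_risk_eq_integral (hP : GoodPair d P η) {f : (Fin d → ℝ) → ℝ}
    (hf : Measurable f) :
    risk P f - risk P η = ∫ x, (|η x| - η x * sgn (f x)) / 2 ∂(P.map Prod.fst) := by
  rw [hP.risk_eq_integral hf, hP.risk_eq_integral hP.2.1,
    ← integral_sub (hP.integrable_one_sub_mul_sgn_div_two hf)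
      (hP.integrable_one_sub_mul_sgn_div_two hP.2.1)]
  congr 1 with x
  rw [mul_sgn_self]; ring

end GoodPair

/-- comparison inequality, `L²(Π)` version. -/
theorem statement1 (B γ : ℝ) (hB : 0 < B) (hγ : 0 < γ) :
    ∃ D2 : ℝ, 0 < D2 ∧
      ∀ (d : ℕ) (P : Measure ((Fin d → ℝ) × ℝ)) (η : (Fin d → ℝ) → ℝ),
        GoodPair d P η →
        LowNoise B γ (P.map Prod.fst) η →
        ∀ f : (Fin d → ℝ) → ℝ, Measurable f → (∃ M : ℝ, ∀ x, |f x| ≤ M) →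
          risk P f - bayesRisk P ≤
            D2 * (Real.sqrt (∫ x, (if sgn (f x) ≠ sgn (η x) then (f x - η x) ^ 2 else 0)
                ∂(P.map Prod.fst))) ^ (2 * (1 + γ) / (2 + γ)) := by
  refine ⟨B + 1, by linarith, fun d P η hP hLN f hf ⟨M, hM⟩ => ?_⟩
  have := hP.isProbabilityMeasure_map_fst
  have hI := integrable_ite_sgn_ne_sq_sub (μ := P.map Prod.fst) hf hP.2.1 hM
    fun x => abs_le.mpr (hP.2.2.1 x)
  refine le_add_one_mul_rpow_of_forall_le (by linarith) (Real.sqrt_nonneg _) fun t ht => ?_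
  rw [Real.sq_sqrt (integral_nonneg fun x => by dsimp only; split <;> positivity)]
  calc risk P f - bayesRisk P ≤ risk P f - risk P η := by linarith [hP.risk_le_bayesRisk]
    _ = ∫ x, (|η x| - η x * sgn (f x)) / 2 ∂(P.map Prod.fst) := hP.risk_sub_risk_eq_integral hf
    _ ≤ t * (P.map Prod.fst).real {x | |η x| ≤ t} + _ / t :=
        integral_abs_sub_mul_sgn_div_two_le hP.2.1 hI ht
    _ ≤ t * (B * t ^ γ) + _ / t := by gcongr; exact hLN.measureReal_le hB.le ht
    _ = B * t ^ (1 + γ) + _ / t := by rw [Real.rpow_add ht, Real.rpow_one]; ring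

end ActivePlugIn
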